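/- Let F = (W, ≤) be a finite rooted S4.1-frame and let a, b ∈ W be distinct points of depth 2 such that each of ↑a ∩ max(F) and ↑b ∩ max(F) contains at least two points. If the cluster of a equals the cluster of b, then the frame F₂ — consisting of a two-element root cluster {r₁, r₂} (with r₁ ≤ r₂ ≤ r₁) below two incomparable maximal points m₁, m₂ — is a p-morphic image of the generated subframe ↑a of F. -/
import Mathlib


/-- `m` is a maximal point: `↑m = {m}`. -/
def IsMaxPt {W : Type*} (le : W → W → Prop) (m : W) : Prop :=
  ∀ x, le m x → x = m

/-- The depth of `w` is at most `n`: every strictly ascending chain (each step goes up and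
not back down, i.e. moves to a strictly higher cluster) starting at `w` has length at most
`n`. -/
def DepthLE {W : Type*} (le : W → W → Prop) (w : W) (n : ℕ) : Prop :=
  ∀ l : List W, l.head? = some w → l.Chain' (fun a b => le a b ∧ ¬ le b a) → l.length ≤ n

/-- `s` is a splitting point witnessing the `n`-roach condition: `s` has depth at most `n`,
the up-set `↑s` is partially ordered (the restriction of `le` is antisymmetric on it), and
for every `w` there is `t_w ∈ ↑s` with `↑w ∩ ↑s = ↑t_w`. -/
def IsSplittingPoint {W : Type*} (le : W → W → Prop) (n : ℕ) (s : W) : Prop :=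
  DepthLE le s n ∧
  (∀ a b, le s a → le s b → le a b → le b a → a = b) ∧
  (∀ w, ∃ t, le s t ∧ ∀ x, (le w x ∧ le s x) ↔ le t x)

/-- An `n`-roach: a frame possessing a splitting point of depth at most `n`. -/
def IsNRoach {W : Type*} (le : W → W → Prop) (n : ℕ) : Prop :=
  ∃ s, IsSplittingPoint le n s

/-- The order of the frame `F₂` on `{r₁, r₂, m₁, m₂} = {0, 1, 2, 3}`: a two-element root
cluster `{r₁, r₂}` (mutually related) below the two incomparable maximal points
`m₁, m₂`. -/
def leF2 : Fin 4 → Fin 4 → Prop := fun a b => a = 0 ∨ a = 1 ∨ a = b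

/-- If `a` and `b` are distinct points of depth 2 of a finite rooted S4.1-frame, each
seeing at least two maximal points, and the cluster of `a` equals the cluster of `b`,
then `F₂` is a p-morphic image of the generated subframe `↑a`. -/
theorem stmt_18 {W : Type*} [Fintype W] (le : W → W → Prop)
    (hrefl : ∀ w, le w w)
    (htrans : ∀ a₁ b₁ c₁, le a₁ b₁ → le b₁ c₁ → le a₁ c₁)
    (hroot : ∃ r, ∀ w, le r w)
    (hs41 : ∀ w, ∃ m, le w m ∧ IsMaxPt le m)
    (a b : W) (hab : a ≠ b)
    (hda : DepthLE le a 2 ∧ ¬ DepthLE le a 1)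
    (hdb : DepthLE le b 2 ∧ ¬ DepthLE le b 1)
    (hMa : ∃ m₁ m₂, m₁ ≠ m₂ ∧ le a m₁ ∧ le a m₂ ∧ IsMaxPt le m₁ ∧ IsMaxPt le m₂)
    (hMb : ∃ m₁ m₂, m₁ ≠ m₂ ∧ le b m₁ ∧ le b m₂ ∧ IsMaxPt le m₁ ∧ IsMaxPt le m₂)
    (hcluster : le a b ∧ le b a) :
    ∃ f : {x // le a x} → Fin 4, Function.Surjective f ∧
      (∀ w u : {x // le a x}, le w.1 u.1 → leF2 (f w) (f u)) ∧
      (∀ (w : {x // le a x}) (v : Fin 4), leF2 (f w) v →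
        ∃ u : {x // le a x}, le w.1 u.1 ∧ f u = v) := by
  classical
  obtain ⟨m₁, m₂, hm12, ham1, ham2, hmax1, hmax2⟩ := hMa
  obtain ⟨hab', hba⟩ := hcluster
  -- every point strictly above the cluster of a is a maximal point
  have hmaxup : ∀ x, le a x → ¬ le x a → IsMaxPt le x := by
    intro x hax hxa
    obtain ⟨m, hxm, hm⟩ := hs41 x
    have hmx : le m x := by
      by_contra hmx
      have h := hda.1 [a, x, m] rfl ?_
      · simp at h
      · exact List.isChain_cons_cons.mpr ⟨⟨hax, hxa⟩,
          List.isChain_cons_cons.mpr ⟨⟨hxm, hmx⟩, List.isChain_singleton _⟩⟩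
    have hxeq : x = m := hm x hmx
    subst hxeq
    exact hm
  -- maximal points above a are not in the cluster of a
  have hnotcl : ∀ m, IsMaxPt le m → ¬ le m a := by
    intro m hm hma
    have h1 : a = m := hm a hma
    subst h1
    exact hab (hm b hab').symm
  have hm1a : ¬ le m₁ a := hnotcl m₁ hmax1
  have hm2a : ¬ le m₂ a := hnotcl m₂ hmax2
  refine ⟨fun x => if le x.1 a then (if x.1 = b then 1 else 0)
      else (if x.1 = m₂ then 3 else 2), ?_, ?_, ?_⟩
  · intro v
    fin_cases v
    · exact ⟨⟨a, hrefl a⟩, by simp [hrefl a, hab]⟩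
    · exact ⟨⟨b, hab'⟩, by simp [hba]⟩
    · exact ⟨⟨m₁, ham1⟩, by simp [hm1a, hm12]⟩
    · exact ⟨⟨m₂, ham2⟩, by simp [hm2a]⟩
  · intro w u hwu
    by_cases hwa : le w.1 a
    · by_cases hwb : w.1 = b
      · simp [hwa, hwb, hba, leF2]
      · simp [hwa, hwb, leF2]
    · have hwm : IsMaxPt le w.1 := hmaxup w.1 w.2 hwa
      have : u.1 = w.1 := hwm u.1 hwu
      have hu : u = w := Subtype.ext this
      subst hu
      right; right; rfl
  · intro w v hv
    by_cases hwa : le w.1 a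
    · fin_cases v
      · exact ⟨⟨a, hrefl a⟩, hwa, by simp [hrefl a, hab]⟩
      · exact ⟨⟨b, hab'⟩, htrans _ _ _ hwa hab', by simp [hba]⟩
      · exact ⟨⟨m₁, ham1⟩, htrans _ _ _ hwa ham1, by simp [hm1a, hm12]⟩
      · exact ⟨⟨m₂, ham2⟩, htrans _ _ _ hwa ham2, by simp [hm2a]⟩
    · refine ⟨w, hrefl _, ?_⟩
      rcases hv with h | h | h
      · exfalso; revert h; simp [hwa]; split <;> simp <;> omega
      · exfalso; revert h; simp [hwa]; split <;> simp <;> omega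
      · exact h
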